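/- arXiv:2011.03614 — 4 statements merged into one kernel-verified Lean document; each statement's English description precedes it below -/
import Mathlib

section
/- Let K be a Poisson random variable with mean θ > 0, L a positive integer, and Y = min(K, L). Then E[Y²] = L² − ∑_{q=0}^{L-1} (2q+1)·Ψ_{q+1}(θ), where Ψ_q(θ) = ∑_{k=0}^{q-1} θ^k e^{-θ}/k!. -/
open Real Finset

lemma nat_sq_diff (m L : ℕ) (h : m ≤ L) :
    ∑ q ∈ Finset.Ico m L, (2 * (q : ℝ) + 1) = (L : ℝ) ^ 2 - (m : ℝ) ^ 2 := by
  induction L with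
  | zero => interval_cases m; simp
  | succ L ih =>
    rcases Nat.lt_or_ge m (L + 1) with hm | hm
    · have hmL : m ≤ L := Nat.lt_succ_iff.mp hm
      rw [Finset.sum_Ico_succ_top hmL, ih hmL]
      push_cast; ring
    · have : m = L + 1 := le_antisymm h hm
      subst this; simp

/-- Second moment of a Poisson(θ) random variable clipped at level `L`:
`E[min(K,L)²] = L² - ∑_{q=0}^{L-1} (2q+1) Ψ_{q+1}(θ)` where
`Ψ_q(θ) = ∑_{k=0}^{q-1} θ^k e^{-θ}/k!`. -/
theorem stmt_4 (θ : ℝ) (hθ : 0 < θ) (L : ℕ) (hL : 0 < L) :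
    ∑' n : ℕ, (Real.exp (-θ) * θ ^ n / (Nat.factorial n)) * (min n L : ℝ) ^ 2
      = (L : ℝ) ^ 2 - ∑ q ∈ Finset.range L,
          (2 * (q : ℝ) + 1) *
            (∑ k ∈ Finset.range (q + 1), θ ^ k * Real.exp (-θ) / (Nat.factorial k)) := by
  set p : ℕ → ℝ := fun n => Real.exp (-θ) * θ ^ n / (Nat.factorial n) with hp
  have hps : Summable p := by
    have := (Real.summable_pow_div_factorial θ).mul_left (Real.exp (-θ))
    simpa [hp, mul_div_assoc] using this
  have hptsum : ∑' n, p n = 1 := by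
    have h1 : ∑' n : ℕ, θ ^ n / (Nat.factorial n) = Real.exp θ := by
      rw [Real.exp_eq_exp_ℝ, NormedSpace.exp_eq_tsum_div]
    calc ∑' n, p n = Real.exp (-θ) * ∑' n : ℕ, θ ^ n / (Nat.factorial n) := by
          rw [← tsum_mul_left]; simp [hp, mul_div_assoc]
      _ = 1 := by rw [h1, ← Real.exp_add]; simp
  -- pointwise identity
  have hpt : ∀ n : ℕ, p n * (min n L : ℝ) ^ 2
      = p n * (L : ℝ) ^ 2
        - ∑ q ∈ Finset.range L, (if n ≤ q then (2 * (q : ℝ) + 1) * p n else 0) := by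
    intro n
    have hsum : ∑ q ∈ Finset.range L, (if n ≤ q then (2 * (q : ℝ) + 1) * p n else 0)
        = (∑ q ∈ Finset.Ico (min n L) L, (2 * (q : ℝ) + 1)) * p n := by
      rw [Finset.sum_mul, ← Finset.sum_filter]
      apply Finset.sum_congr
      · ext q
        simp only [Finset.mem_filter, Finset.mem_range, Finset.mem_Ico]
        constructor
        · rintro ⟨hq, hnq⟩; exact ⟨le_trans (min_le_left _ _) hnq, hq⟩
        · rintro ⟨hmq, hq⟩
          refine ⟨hq, ?_⟩
          rcases le_or_gt n L with h | h
          · simpa [min_eq_left h] using hmq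
          · exact absurd (le_trans (by simp [min_eq_right h.le]) hmq) (not_le.mpr hq)
      · intros; rfl
    rw [hsum, nat_sq_diff _ _ (min_le_right n L)]
    have : ((min n L : ℕ) : ℝ) = min (n : ℝ) (L : ℝ) := by push_cast; rfl
    rw [← this]; ring
  have hqs : ∀ q ∈ Finset.range L,
      Summable (fun n : ℕ => if n ≤ q then (2 * (q : ℝ) + 1) * p n else 0) := by
    intro q _
    apply summable_of_ne_finset_zero (s := Finset.range (q + 1))
    intro n hn
    simp only [Finset.mem_range, not_lt] at hn
    rw [if_neg (by omega)]
  have hgs : Summable (fun n : ℕ =>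
      ∑ q ∈ Finset.range L, (if n ≤ q then (2 * (q : ℝ) + 1) * p n else 0)) :=
    summable_sum fun q hq => hqs q hq
  calc ∑' n : ℕ, p n * (min n L : ℝ) ^ 2
      = ∑' n : ℕ, (p n * (L : ℝ) ^ 2
          - ∑ q ∈ Finset.range L, (if n ≤ q then (2 * (q : ℝ) + 1) * p n else 0)) := by
        exact tsum_congr hpt
    _ = (∑' n, p n * (L : ℝ) ^ 2)
          - ∑' n : ℕ, ∑ q ∈ Finset.range L, (if n ≤ q then (2 * (q : ℝ) + 1) * p n else 0) :=
        Summable.tsum_sub (hps.mul_right _) hgs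
    _ = (L : ℝ) ^ 2 - ∑ q ∈ Finset.range L,
          (2 * (q : ℝ) + 1) *
            (∑ k ∈ Finset.range (q + 1), θ ^ k * Real.exp (-θ) / (Nat.factorial k)) := by
        congr 1
        · rw [tsum_mul_right, hptsum, one_mul]
        · rw [Summable.tsum_finsetSum hqs]
          apply Finset.sum_congr rfl
          intro q _
          rw [tsum_eq_sum (s := Finset.range (q + 1))
            (by intro n hn; simp only [Finset.mem_range, not_lt] at hn
                rw [if_neg (by omega)])]
          rw [Finset.mul_sum]
          apply Finset.sum_congr rfl
          intro k hk
          simp only [Finset.mem_range] at hk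
          rw [if_pos (by omega)]
          simp only [hp]; ring
end

section
/- Let K ~ Poisson(θ), L a positive integer, and Y = min(K, L). Then dE[Y]/dθ = Ψ_{L-1}(θ) − θ·θ^{L-2}e^{−θ}/(L−2)! + L·θ^{L-1}e^{−θ}/(L−1)! when L ≥ 2, and dE[Y]/dθ = e^{−θ} when L = 1, where Ψ_q(θ) = ∑_{k=0}^{q-1}θ^k e^{-θ}/k!. -/
open Real Finset

lemma psi_deriv (q : ℕ) (θ : ℝ) :
    HasDerivAt (fun t : ℝ => ∑ k ∈ Finset.range q, t ^ k * Real.exp (-t) / (Nat.factorial k))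
      (if q = 0 then 0 else -(θ ^ (q - 1) * Real.exp (-θ) / (Nat.factorial (q - 1)))) θ := by
  induction q with
  | zero => simpa using hasDerivAt_const θ (0 : ℝ)
  | succ n ih =>
    have hexp : HasDerivAt (fun t : ℝ => Real.exp (-t)) (-Real.exp (-θ)) θ := by
      simpa using ((hasDerivAt_neg θ).exp)
    have hpow : HasDerivAt (fun t : ℝ => t ^ n) ((n : ℝ) * θ ^ (n - 1)) θ := hasDerivAt_pow n θ
    have hterm : HasDerivAt (fun t : ℝ => t ^ n * Real.exp (-t) / (Nat.factorial n))
        (((n : ℝ) * θ ^ (n - 1) * Real.exp (-θ) + θ ^ n * (-Real.exp (-θ))) / (Nat.factorial n)) θ :=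
      (hpow.mul hexp).div_const _
    have h : HasDerivAt (fun t : ℝ => (∑ k ∈ Finset.range n, t ^ k * Real.exp (-t) / (Nat.factorial k))
        + t ^ n * Real.exp (-t) / (Nat.factorial n)) _ θ := ih.add hterm
    have hfun : (fun t : ℝ => (∑ k ∈ Finset.range n, t ^ k * Real.exp (-t) / (Nat.factorial k))
        + t ^ n * Real.exp (-t) / (Nat.factorial n))
        = fun t : ℝ => ∑ k ∈ Finset.range (n + 1), t ^ k * Real.exp (-t) / (Nat.factorial k) := by
      funext t; rw [Finset.sum_range_succ]
    rw [hfun] at h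
    convert h using 1
    rcases Nat.eq_zero_or_pos n with hn | hn
    · subst hn; simp
    · have hne : n ≠ 0 := hn.ne'
      simp only [if_neg hne, Nat.succ_ne_zero, if_neg, Nat.add_sub_cancel]
      obtain ⟨m, rfl⟩ := Nat.exists_eq_succ_of_ne_zero hne
      have hfac : (Nat.factorial (m + 1) : ℝ) = (m + 1) * Nat.factorial m := by
        push_cast [Nat.factorial_succ]; ring
      simp only [Nat.succ_sub_one, hfac]
      have h1 : (Nat.factorial m : ℝ) ≠ 0 := by positivity
      have h2 : ((m : ℝ) + 1) ≠ 0 := by positivity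
      field_simp
      push_cast
      field_simp
      ring

/-- Derivative of the mean of the clipped Poisson `E[min(K,L)]
= θ Ψ_{L-1}(θ) + L (1 - Ψ_L(θ))` with respect to θ:
it equals `Ψ_{L-1}(θ) - θ·θ^{L-2}e^{-θ}/(L-2)! + L·θ^{L-1}e^{-θ}/(L-1)!` for
`L ≥ 2` and `e^{-θ}` for `L = 1`. -/
theorem stmt_12 (L : ℕ) (hL : 0 < L) (θ : ℝ) (hθ : 0 < θ)
    (Ψ : ℕ → ℝ → ℝ)
    (hΨ : Ψ = fun q t => ∑ k ∈ Finset.range q, t ^ k * Real.exp (-t) / (Nat.factorial k)) :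
    (2 ≤ L →
      HasDerivAt (fun t : ℝ => t * Ψ (L - 1) t + (L : ℝ) * (1 - Ψ L t))
        (Ψ (L - 1) θ - θ * (θ ^ (L - 2) * Real.exp (-θ) / (Nat.factorial (L - 2)))
          + (L : ℝ) * (θ ^ (L - 1) * Real.exp (-θ) / (Nat.factorial (L - 1)))) θ) ∧
    (L = 1 →
      HasDerivAt (fun t : ℝ => t * Ψ (L - 1) t + (L : ℝ) * (1 - Ψ L t))
        (Real.exp (-θ)) θ) := by
  subst hΨ
  constructor
  · intro hL2
    have h1 : HasDerivAt (fun t : ℝ => t * ∑ k ∈ Finset.range (L - 1), t ^ k * Real.exp (-t) / (Nat.factorial k))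
        (1 * (∑ k ∈ Finset.range (L - 1), θ ^ k * Real.exp (-θ) / (Nat.factorial k))
          + θ * (-(θ ^ (L - 1 - 1) * Real.exp (-θ) / (Nat.factorial (L - 1 - 1))))) θ := by
      have : HasDerivAt (fun t : ℝ => t * ∑ k ∈ Finset.range (L - 1), t ^ k * Real.exp (-t) / (Nat.factorial k)) _ θ := (hasDerivAt_id θ).mul (psi_deriv (L - 1) θ)
      have hne : L - 1 ≠ 0 := by omega
      rw [if_neg hne] at this
      simpa using this
    have h2 : HasDerivAt (fun t : ℝ => (L : ℝ) * (1 - ∑ k ∈ Finset.range L, t ^ k * Real.exp (-t) / (Nat.factorial k)))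
        ((L : ℝ) * (0 - (-(θ ^ (L - 1) * Real.exp (-θ) / (Nat.factorial (L - 1)))))) θ :=
      (((hasDerivAt_const θ (1 : ℝ)).sub (by simpa [if_neg hL.ne'] using psi_deriv L θ))).const_mul _
    have : HasDerivAt (fun t : ℝ => t * ∑ k ∈ Finset.range (L - 1), t ^ k * Real.exp (-t) / (Nat.factorial k)
        + (L : ℝ) * (1 - ∑ k ∈ Finset.range L, t ^ k * Real.exp (-t) / (Nat.factorial k))) _ θ := h1.add h2
    convert this using 1
    have : L - 1 - 1 = L - 2 := by omega
    rw [this]; ring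
  · intro hL1
    subst hL1
    have : HasDerivAt (fun t : ℝ => t * ∑ k ∈ Finset.range (1 - 1), t ^ k * Real.exp (-t) / (Nat.factorial k)
        + (1 : ℝ) * (1 - ∑ k ∈ Finset.range 1, t ^ k * Real.exp (-t) / (Nat.factorial k)))
        (Real.exp (-θ)) θ := by
      have hfun : (fun t : ℝ => t * ∑ k ∈ Finset.range (1 - 1), t ^ k * Real.exp (-t) / (Nat.factorial k)
          + (1 : ℝ) * (1 - ∑ k ∈ Finset.range 1, t ^ k * Real.exp (-t) / (Nat.factorial k)))
          = fun t : ℝ => 1 - Real.exp (-t) := by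
        funext t; simp
      rw [hfun]
      have hexp : HasDerivAt (fun t : ℝ => Real.exp (-t)) (-Real.exp (-θ)) θ := by
        simpa using ((hasDerivAt_neg θ).exp)
      have h3 : HasDerivAt (fun t : ℝ => 1 - Real.exp (-t)) _ θ := (hasDerivAt_const θ (1 : ℝ)).sub hexp
      simpa using h3
    simpa using this
end

section
/- Let K ~ Poisson(θ) with θ > 0 and L a positive integer. The mean of the clipped variable, μ(θ) = E[min(K,L)] = θΨ_{L-1}(θ) + L(1 − Ψ_L(θ)), is strictly increasing in θ on (0,∞) and satisfies 0 < μ(θ) < L, with lim_{θ→0} μ(θ) = 0 and lim_{θ→∞} μ(θ) = L. -/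
open Real Finset Set Filter

/-- Poisson pmf term. -/
noncomputable def pjQIS (j : ℕ) (t : ℝ) : ℝ := t ^ j * Real.exp (-t) / (Nat.factorial j)

/-- `G q` is `pjQIS (q-1)` with the convention `G 0 = 0`. -/
noncomputable def GQIS : ℕ → ℝ → ℝ
  | 0 => fun _ => 0
  | (n+1) => pjQIS n

lemma pjQIS_nonneg {j : ℕ} {t : ℝ} (ht : 0 ≤ t) : 0 ≤ pjQIS j t := by
  unfold pjQIS
  positivity

lemma pjQIS_zero_pos {t : ℝ} : 0 < pjQIS 0 t := by
  unfold pjQIS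
  simp [Real.exp_pos]

lemma hasDerivAt_term (k : ℕ) (t : ℝ) :
    HasDerivAt (fun t : ℝ => t ^ k * Real.exp (-t) / (Nat.factorial k))
      (GQIS k t - GQIS (k+1) t) t := by
  have h1 : HasDerivAt (fun t : ℝ => t ^ k) ((k : ℝ) * t ^ (k - 1)) t := hasDerivAt_pow k t
  have h2 : HasDerivAt (fun t : ℝ => Real.exp (-t)) (-Real.exp (-t)) t := by
    simpa using (hasDerivAt_neg t).exp
  have h3 : HasDerivAt (fun t : ℝ => t ^ k * Real.exp (-t) / (Nat.factorial k))
      (((k : ℝ) * t ^ (k - 1) * Real.exp (-t) + t ^ k * -Real.exp (-t)) / (Nat.factorial k : ℝ)) t :=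
    (h1.mul h2).div_const (Nat.factorial k : ℝ)
  convert h3 using 1
  cases k with
  | zero => simp [GQIS, pjQIS]
  | succ n =>
      have hfn : (Nat.factorial n : ℝ) ≠ 0 := by positivity
      have hfsn : (Nat.factorial (n+1) : ℝ) ≠ 0 := by positivity
      simp only [GQIS, pjQIS]
      rw [Nat.factorial_succ]
      push_cast
      field_simp
      ring

lemma hasDerivAt_psi (q : ℕ) (t : ℝ) :
    HasDerivAt (fun t : ℝ => ∑ k ∈ Finset.range q, t ^ k * Real.exp (-t) / (Nat.factorial k))
      (- GQIS q t) t := by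
  have h : HasDerivAt (fun t : ℝ => ∑ k ∈ Finset.range q, t ^ k * Real.exp (-t) / (Nat.factorial k))
      (∑ k ∈ Finset.range q, (GQIS k t - GQIS (k+1) t)) t :=
    HasDerivAt.fun_sum (fun k _ => hasDerivAt_term k t)
  have hsum : ∑ k ∈ Finset.range q, (GQIS k t - GQIS (k+1) t) = - GQIS q t := by
    rw [Finset.sum_range_sub' (fun k => GQIS k t) q]
    simp [GQIS]
  rwa [hsum] at h

/-- Soft saturation of the QIS response: the clipped-Poisson mean
`μ(θ) = θ Ψ_{L-1}(θ) + L (1 - Ψ_L(θ))` is strictly increasing on `(0,∞)`,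
satisfies `0 < μ(θ) < L`, tends to 0 as `θ → 0⁺` and to `L` as `θ → ∞`. -/
theorem stmt_13 (L : ℕ) (hL : 0 < L)
    (Ψ : ℕ → ℝ → ℝ)
    (hΨ : Ψ = fun q t => ∑ k ∈ Finset.range q, t ^ k * Real.exp (-t) / (Nat.factorial k))
    (m : ℝ → ℝ)
    (hm : m = fun t => t * Ψ (L - 1) t + (L : ℝ) * (1 - Ψ L t)) :
    StrictMonoOn m (Set.Ioi 0) ∧
    (∀ θ : ℝ, 0 < θ → 0 < m θ ∧ m θ < L) ∧
    Filter.Tendsto m (nhdsWithin 0 (Set.Ioi 0)) (nhds 0) ∧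
    Filter.Tendsto m Filter.atTop (nhds (L : ℝ)) := by
  -- Ψ expressed via pjQIS
  have hΨp : ∀ q t, Ψ q t = ∑ k ∈ Finset.range q, pjQIS k t := by
    intro q t; rw [hΨ]; rfl
  -- derivative of m is Ψ L
  have hderiv : ∀ t : ℝ, HasDerivAt m (Ψ L t) t := by
    intro t
    have h1 : HasDerivAt (fun t : ℝ => Ψ (L - 1) t) (- GQIS (L-1) t) t := by
      rw [hΨ]; exact hasDerivAt_psi (L-1) t
    have h2 : HasDerivAt (fun t : ℝ => Ψ L t) (- GQIS L t) t := by
      rw [hΨ]; exact hasDerivAt_psi L t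
    have hmd : HasDerivAt m
        (1 * Ψ (L-1) t + t * (- GQIS (L-1) t) + (L : ℝ) * (0 - (- GQIS L t))) t := by
      rw [hm]
      exact ((hasDerivAt_id t).mul h1).add
        (((hasDerivAt_const t (1:ℝ)).sub h2).const_mul (L : ℝ))
    have hkey : 1 * Ψ (L-1) t + t * (- GQIS (L-1) t) + (L : ℝ) * (0 - (- GQIS L t)) = Ψ L t := by
      obtain ⟨n, rfl⟩ : ∃ n, L = n + 1 := ⟨L - 1, (Nat.succ_pred_eq_of_pos hL).symm⟩
      simp only [Nat.add_sub_cancel]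
      rw [hΨp, hΨp, Finset.sum_range_succ]
      cases n with
      | zero => simp [GQIS]
      | succ k =>
          rw [Finset.sum_range_succ]
          simp only [GQIS]
          have hfk : (Nat.factorial k : ℝ) ≠ 0 := by positivity
          have hfsk : (Nat.factorial (k+1) : ℝ) ≠ 0 := by positivity
          unfold pjQIS
          rw [Nat.factorial_succ]
          push_cast
          field_simp
          ring
    rwa [hkey] at hmd
  have hcont : Continuous m := by
    have : Differentiable ℝ m := fun t => (hderiv t).differentiableAt
    exact this.continuous
  -- positivity of Ψ L for t ≥ 0
  have hΨpos : ∀ t : ℝ, 0 ≤ t → 0 < Ψ L t := by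
    intro t ht
    rw [hΨp]
    apply Finset.sum_pos' (fun k _ => pjQIS_nonneg ht)
    exact ⟨0, Finset.mem_range.mpr hL, pjQIS_zero_pos⟩
  -- strict mono on Ici 0 (hence on Ioi 0)
  have hmono : StrictMonoOn m (Set.Ici 0) := by
    apply strictMonoOn_of_deriv_pos (convex_Ici 0) hcont.continuousOn
    intro x hx
    rw [interior_Ici] at hx
    rw [(hderiv x).deriv]
    exact hΨpos x (le_of_lt hx)
  have hmonoIoi : StrictMonoOn m (Set.Ioi 0) :=
    hmono.mono (Set.Ioi_subset_Ici le_rfl)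
  -- reindexing identity: t * Ψ (L-1) t = ∑_{j<L} j * pjQIS j t
  have hreidx : ∀ t : ℝ, t * Ψ (L - 1) t = ∑ j ∈ Finset.range L, (j : ℝ) * pjQIS j t := by
    intro t
    obtain ⟨n, rfl⟩ : ∃ n, L = n + 1 := ⟨L - 1, (Nat.succ_pred_eq_of_pos hL).symm⟩
    simp only [Nat.add_sub_cancel]
    rw [Finset.sum_range_succ' (fun j => (j : ℝ) * pjQIS j t) n]
    rw [hΨp, Finset.mul_sum]
    simp only [Nat.cast_zero, zero_mul, add_zero]
    apply Finset.sum_congr rfl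
    intro i _
    unfold pjQIS
    have hfi : (Nat.factorial i : ℝ) ≠ 0 := by positivity
    have hfsi : (Nat.factorial (i+1) : ℝ) ≠ 0 := by positivity
    rw [Nat.factorial_succ]
    push_cast
    field_simp
    ring
  -- value at 0
  have hm0 : m 0 = 0 := by
    rw [hm]
    simp only
    obtain ⟨n, rfl⟩ : ∃ n, L = n + 1 := ⟨L - 1, (Nat.succ_pred_eq_of_pos hL).symm⟩
    rw [hΨ]
    simp only
    rw [Finset.sum_range_succ' (fun k => (0:ℝ) ^ k * Real.exp (-(0:ℝ)) / (Nat.factorial k)) n]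
    simp
  -- bounds
  have hbounds : ∀ θ : ℝ, 0 < θ → 0 < m θ ∧ m θ < L := by
    intro θ hθ
    constructor
    · have := hmono (Set.self_mem_Ici) (Set.mem_Ici.mpr hθ.le) hθ
      rwa [hm0] at this
    · have hlt : ∑ j ∈ Finset.range L, (j : ℝ) * pjQIS j θ
          < ∑ j ∈ Finset.range L, (L : ℝ) * pjQIS j θ := by
        apply Finset.sum_lt_sum
        · intro j hj
          exact mul_le_mul_of_nonneg_right
            (by exact_mod_cast (Finset.mem_range.mp hj).le) (pjQIS_nonneg hθ.le)
        · exact ⟨0, Finset.mem_range.mpr hL, by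
            simpa using mul_pos (by exact_mod_cast hL) (pjQIS_zero_pos (t := θ))⟩
      have hLΨ : (L : ℝ) * Ψ L θ = ∑ j ∈ Finset.range L, (L : ℝ) * pjQIS j θ := by
        rw [hΨp, Finset.mul_sum]
      have : m θ = ∑ j ∈ Finset.range L, (j : ℝ) * pjQIS j θ + (L : ℝ) - (L : ℝ) * Ψ L θ := by
        rw [hm]; simp only; rw [hreidx]; ring
      rw [this, hLΨ]
      linarith
  refine ⟨hmonoIoi, hbounds, ?_, ?_⟩
  · have := hcont.continuousAt (x := (0:ℝ))
    have h := this.continuousWithinAt (s := Set.Ioi (0:ℝ))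
    rw [ContinuousWithinAt, hm0] at h
    exact h
  · -- limit at infinity
    have hpj0 : ∀ j : ℕ, Tendsto (fun t : ℝ => pjQIS j t) atTop (nhds 0) := by
      intro j
      have := (Real.tendsto_pow_mul_exp_neg_atTop_nhds_zero j).div_const (Nat.factorial j : ℝ)
      simpa [pjQIS] using this
    have hsum1 : Tendsto (fun t : ℝ => ∑ j ∈ Finset.range L, (j : ℝ) * pjQIS j t)
        atTop (nhds 0) := by
      have : Tendsto (fun t : ℝ => ∑ j ∈ Finset.range L, (j : ℝ) * pjQIS j t)
          atTop (nhds (∑ j ∈ Finset.range L, (j : ℝ) * 0)) :=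
        tendsto_finset_sum _ (fun j _ => (hpj0 j).const_mul (j : ℝ))
      simpa using this
    have hsum2 : Tendsto (fun t : ℝ => Ψ L t) atTop (nhds 0) := by
      have : Tendsto (fun t : ℝ => ∑ j ∈ Finset.range L, pjQIS j t)
          atTop (nhds (∑ j ∈ Finset.range L, (0:ℝ))) :=
        tendsto_finset_sum _ (fun j _ => hpj0 j)
      simp only [Finset.sum_const, smul_zero, Finset.sum_eq_card_nsmul] at this
      have h2 : Tendsto (fun t : ℝ => Ψ L t) atTop
          (nhds (∑ j ∈ Finset.range L, (0:ℝ))) := by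
        simp only [hΨp]
        exact tendsto_finset_sum _ (fun j _ => hpj0 j)
      simpa using h2
    have hmt : Tendsto m atTop (nhds (0 + (L : ℝ) * (1 - 0))) := by
      have heq : m = fun t => (∑ j ∈ Finset.range L, (j : ℝ) * pjQIS j t)
          + (L : ℝ) * (1 - Ψ L t) := by
        funext t
        rw [hm]
        simp only
        rw [hreidx]
      rw [heq]
      exact hsum1.add (((tendsto_const_nhds).sub hsum2).const_mul (L : ℝ))
    simpa using hmt
end

section
/- Let Δ_1,…,Δ_M > 0, λ > 0, L > 0, and suppose σ_H[m]² = K·Δ_m·λ if Δ_m λ < L and σ_H[m]² = +∞ otherwise (the CIS model). Then the weights maximizing Kλ/√(∑_m (w[m]/Δ_m)² σ_H[m]²) subject to ∑ w[m] = 1, w[m] ≥ 0, and w[m] = 0 whenever Δ_m λ ≥ L, are w[m] = Δ_m·𝟙{Δ_m λ < L} / ∑_{k=1}^M Δ_k·𝟙{Δ_k λ < L}, assuming at least one m satisfies Δ_m λ < L. -/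
open Real Finset

/-- CIS optimal HDR weights: with shot-noise variance `σ_H[m]² = K Δ_m λ` for
unsaturated exposures (`Δ_m λ < L`) and saturated exposures forced to zero
weight, the weights maximizing `Kλ/√(∑ (w m/Δ m)² σ_H[m]²)` are
`w m = Δ_m 𝟙{Δ_m λ < L} / ∑_k Δ_k 𝟙{Δ_k λ < L}`. -/
theorem stmt_15 (M : ℕ) (hM : 0 < M) (Δ : Fin M → ℝ) (hΔ : ∀ m, 0 < Δ m)
    (lam L Kf : ℝ) (hlam : 0 < lam) (hL : 0 < L) (hK : 0 < Kf)
    (hunsat : ∃ m, Δ m * lam < L)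
    (obj : (Fin M → ℝ) → ℝ)
    (hobj : obj = fun w => Kf * lam /
      Real.sqrt (∑ m, if Δ m * lam < L then (w m / Δ m) ^ 2 * (Kf * Δ m * lam) else 0))
    (wstar : Fin M → ℝ)
    (hwstar : ∀ m, wstar m =
      (if Δ m * lam < L then Δ m else 0) / ∑ k, (if Δ k * lam < L then Δ k else 0)) :
    (∀ m, 0 ≤ wstar m) ∧ (∑ m, wstar m = 1) ∧
    (∀ m, Δ m * lam ≥ L → wstar m = 0) ∧
    (∀ w : Fin M → ℝ, (∀ m, 0 ≤ w m) → (∑ m, w m = 1) →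
      (∀ m, Δ m * lam ≥ L → w m = 0) → obj w ≤ obj wstar) := by
  subst hobj
  set S : ℝ := ∑ k, (if Δ k * lam < L then Δ k else 0) with hSdef
  have hS0 : 0 < S := by
    obtain ⟨m, hm⟩ := hunsat
    refine Finset.sum_pos' (fun k _ => ?_) ⟨m, Finset.mem_univ m, ?_⟩
    · split
      · exact (hΔ k).le
      · exact le_refl 0
    · rw [if_pos hm]; exact hΔ m
  have h1 : ∀ m, 0 ≤ wstar m := by
    intro m
    rw [hwstar]
    apply div_nonneg _ hS0.le
    split
    · exact (hΔ m).le
    · exact le_refl 0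
  have h2 : ∑ m, wstar m = 1 := by
    simp only [hwstar]
    rw [← Finset.sum_div, ← hSdef, div_self hS0.ne']
  have h3 : ∀ m, Δ m * lam ≥ L → wstar m = 0 := by
    intro m hm
    rw [hwstar, if_neg (not_lt.mpr hm), zero_div]
  refine ⟨h1, h2, h3, ?_⟩
  intro w hw0 hw1 hwz
  -- Denominator at wstar
  have hDstar : (∑ m, if Δ m * lam < L then (wstar m / Δ m) ^ 2 * (Kf * Δ m * lam) else 0)
      = Kf * lam / S := by
    have : ∀ m, (if Δ m * lam < L then (wstar m / Δ m) ^ 2 * (Kf * Δ m * lam) else 0)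
        = (if Δ m * lam < L then Δ m else 0) * (Kf * lam / S ^ 2) := by
      intro m
      rw [hwstar]
      split_ifs with h
      · have hne := (hΔ m).ne'
        have hne2 := hS0.ne'
        field_simp
      · simp
    rw [Finset.sum_congr rfl (fun m _ => this m), ← Finset.sum_mul, ← hSdef]
    field_simp
  -- Cauchy–Schwarz lower bound for the denominator at w
  have hCS : Kf * lam / S ≤ ∑ m, (if Δ m * lam < L then (w m / Δ m) ^ 2 * (Kf * Δ m * lam) else 0) := by
    have key := Finset.sum_mul_sq_le_sq_mul_sq Finset.univ
      (fun m => if Δ m * lam < L then Real.sqrt (Δ m) else 0)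
      (fun m => if Δ m * lam < L then w m / Real.sqrt (Δ m) else 0)
    have e1 : ∑ m, (fun m => if Δ m * lam < L then Real.sqrt (Δ m) else 0) m *
        (fun m => if Δ m * lam < L then w m / Real.sqrt (Δ m) else 0) m = 1 := by
      rw [← hw1]
      refine Finset.sum_congr rfl (fun m _ => ?_)
      simp only
      split_ifs with h
      · have hne : Real.sqrt (Δ m) ≠ 0 := Real.sqrt_ne_zero'.mpr (hΔ m)
        field_simp
      · exact (zero_mul _).trans (hwz m (not_lt.mp h)).symm
    have e2 : ∑ m, ((fun m => if Δ m * lam < L then Real.sqrt (Δ m) else 0) m) ^ 2 = S := by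
      refine Finset.sum_congr rfl (fun m _ => ?_)
      simp only
      split_ifs with h
      · exact Real.sq_sqrt (hΔ m).le
      · exact zero_pow two_ne_zero
    have e3 : ∑ m, ((fun m => if Δ m * lam < L then w m / Real.sqrt (Δ m) else 0) m) ^ 2
        = ∑ m, (if Δ m * lam < L then w m ^ 2 / Δ m else 0) := by
      refine Finset.sum_congr rfl (fun m _ => ?_)
      simp only
      split_ifs with h
      · rw [div_pow, Real.sq_sqrt (hΔ m).le]
      · exact zero_pow two_ne_zero
    rw [e1, e2, e3, one_pow] at key
    have hQ : ∀ m, (if Δ m * lam < L then (w m / Δ m) ^ 2 * (Kf * Δ m * lam) else 0)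
        = Kf * lam * (if Δ m * lam < L then w m ^ 2 / Δ m else 0) := by
      intro m
      split_ifs with h
      · have hne := (hΔ m).ne'
        field_simp
      · simp
    rw [Finset.sum_congr rfl (fun m _ => hQ m), ← Finset.mul_sum]
    rw [div_le_iff₀ hS0]
    calc Kf * lam = Kf * lam * 1 := (mul_one _).symm
      _ ≤ Kf * lam * (S * ∑ m, (if Δ m * lam < L then w m ^ 2 / Δ m else 0)) := by
          exact mul_le_mul_of_nonneg_left key (by positivity)
      _ = Kf * lam * (∑ m, (if Δ m * lam < L then w m ^ 2 / Δ m else 0)) * S := by ring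
  dsimp only
  rw [hDstar]
  have hpos : 0 < Real.sqrt (Kf * lam / S) := Real.sqrt_pos.mpr (by positivity)
  gcongr
end
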